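/- Main combined estimate: Let p₀, q₀ satisfy p₀² + q₀² = 1 with p₀/q₀ a quadratic irrational admitting approximation constant C₀ > 0 (|p₀/q₀ − a/b| ≥ C₀/b² for all integers a, b≠0). Let f : ℝ² → ℝ be C⁴ and ℤ²-periodic, and let p, q, T (T > 0, pT, qT coprime nonzero integers). Define F(λ) = (1/T)∫₀ᵀ f(pt, qt+λ) dt and suppose ∫₀¹ F(λ)dλ − F(0) ≥ (1/2)(p−p₀)² + (1/2)(q−q₀)². Then there is a constant C > 0 depending only on p₀, q₀, C₀ (not on f, p, q, T) and some λ ∈ ℝ such that |(1/T)∫₀ᵀ ∂⁴f/∂y⁴(pt, qt+λ) dt| ≥ C; in particular the C⁴-norm of f is at least C. -/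

import Mathlib

/-!
Write `G k l` for the average of `∂ʸᵏ f` over the closed orbit shifted vertically by `l`, so that
`G 0 = F` and `G k' = G (k + 1)`. By Bézout, a vertical shift by `1 / a` is a time shift of the
orbit composed with an integer translation, so every `G k` is `1 / |a|`-periodic. A periodic
function whose derivative is bounded by `B` oscillates by at most `B / |a|`, and the derivative of
a periodic function vanishes somewhere; going down from `|G 4| < C` this gives
`∫₀¹ F - F 0 ≤ C / a⁴`, hence `|(p, q) - (p₀, q₀)|² ≤ 2 C / a⁴`.

On the other hand `D = p₀ b - q₀ a` satisfies `|q₀| C₀ ≤ |D| |b|` by the approximation hypothesis,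
while `D = T (p₀ (q - q₀) - q₀ (p - p₀))` is at most `T |(p, q) - (p₀, q₀)|` since `(p₀, q₀)` is a
unit vector. As `T = a / p` and `(p, q)` is close to `(p₀, q₀)` with `p₀ ≠ 0`, the powers of `a`
cancel and the two bounds are incompatible once `C` is small.
-/

open Function Set MeasureTheory

namespace Function.Periodic

variable {φ ψ : ℝ → ℝ} {c B : ℝ}

theorem abs_sub_le_of_hasDerivAt (hφ : Periodic φ c) (hc : 0 < c)
    (hd : ∀ x, HasDerivAt φ (ψ x) x) (hB : ∀ x, |ψ x| ≤ B) (x y : ℝ) :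
    |φ x - φ y| ≤ B * c := by
  obtain ⟨x', hx', hxx'⟩ := hφ.exists_mem_Ico hc x y
  have hmv := norm_image_sub_le_of_norm_deriv_le_segment' (f := φ) (f' := ψ) (C := B)
    (fun z _ => (hd z).hasDerivWithinAt) (fun z _ => hB z) x' (Ico_subset_Icc_self hx')
  rw [hxx']
  calc |φ x' - φ y| ≤ B * (x' - y) := hmv
    _ ≤ B * c := by
      have : 0 ≤ B := (abs_nonneg _).trans (hB x)
      gcongr; linarith [hx'.2]

theorem exists_hasDerivAt_eq_zero (hφ : Periodic φ c) (hc : 0 < c)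
    (hd : ∀ x, HasDerivAt φ (ψ x) x) : ∃ z, ψ z = 0 := by
  have hcont : Continuous φ := continuous_iff_continuousAt.2 fun x => (hd x).continuousAt
  obtain ⟨z, -, hz⟩ := _root_.exists_hasDerivAt_eq_zero hc hcont.continuousOn
    (by simpa using (hφ 0).symm) fun x _ => hd x
  exact ⟨z, hz⟩

end Function.Periodic

theorem abs_sub_le_mul_pow_of_periodic_of_hasDerivAt {G : ℕ → ℝ → ℝ} {c B : ℝ} (hc : 0 < c)
    (n : ℕ) (hper : ∀ k ≤ n, Periodic (G k) c) (hd : ∀ k ≤ n, ∀ x, HasDerivAt (G k) (G (k + 1) x) x)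
    (hB : ∀ x, |G (n + 1) x| ≤ B) (x y : ℝ) : |G 0 x - G 0 y| ≤ B * c ^ (n + 1) := by
  induction n generalizing G x y with
  | zero => simpa using (hper 0 le_rfl).abs_sub_le_of_hasDerivAt hc (hd 0 le_rfl) hB x y
  | succ n ih =>
    have hG1 : ∀ x y, |G 1 x - G 1 y| ≤ B * c ^ (n + 1) :=
      ih (G := fun k => G (k + 1)) (fun k hk => hper (k + 1) (by omega))
        (fun k hk => hd (k + 1) (by omega)) hB
    obtain ⟨z, hz⟩ := (hper 0 (by omega)).exists_hasDerivAt_eq_zero hc (hd 0 (by omega))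
    have hG1' : ∀ x, |G 1 x| ≤ B * c ^ (n + 1) := fun x => by simpa [hz] using hG1 x z
    calc |G 0 x - G 0 y| ≤ B * c ^ (n + 1) * c :=
          (hper 0 (by omega)).abs_sub_le_of_hasDerivAt hc (hd 0 (by omega)) hG1' x y
      _ = B * c ^ (n + 1 + 1) := by ring

theorem intervalIntegral_sub_le_of_forall_sub_le {φ : ℝ → ℝ} (hφ : Continuous φ) {K : ℝ}
    (hK : ∀ x, φ x - φ 0 ≤ K) : (∫ x in (0 : ℝ)..1, φ x) - φ 0 ≤ K := by
  calc (∫ x in (0 : ℝ)..1, φ x) - φ 0 = ∫ x in (0 : ℝ)..1, (φ x - φ 0) := by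
        simp [intervalIntegral.integral_sub (hφ.intervalIntegrable 0 1) intervalIntegrable_const]
    _ ≤ ∫ _ in (0 : ℝ)..1, K :=
        intervalIntegral.integral_mono_on zero_le_one
          ((hφ.sub continuous_const).intervalIntegrable 0 1) intervalIntegrable_const
          fun x _ => hK x
    _ = K := by simp

section Slices

variable {𝕜 F : Type*} [NontriviallyNormedField 𝕜] [NormedAddCommGroup F] [NormedSpace 𝕜 F]
  {n : WithTop ℕ∞} {k : ℕ}

theorem ContDiff.hasDerivAt_iteratedDeriv {f : 𝕜 → F} (hf : ContDiff 𝕜 n f) (hk : k < n)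
    (x : 𝕜) :
    HasDerivAt (iteratedDeriv k f) (iteratedDeriv (k + 1) f x) x := by
  rw [iteratedDeriv_succ]
  exact (hf.differentiable_iteratedDeriv k hk x).hasDerivAt

theorem Function.Periodic.iteratedFDeriv {E : Type*} [NormedAddCommGroup E] [NormedSpace 𝕜 E]
    {f : E → F} {u : E} (hf : Periodic f u) (k : ℕ) : Periodic (iteratedFDeriv 𝕜 k f) u := by
  intro x
  rw [← iteratedFDeriv_comp_add_right, show (fun z => f (z + u)) = f from funext hf]

theorem iteratedDeriv_comp_prodMk_eq {f : 𝕜 × 𝕜 → F} (hf : ContDiff 𝕜 n f) (hk : k ≤ n)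
    (x y : 𝕜) :
    iteratedDeriv k (fun y => f (x, y)) y = iteratedFDeriv 𝕜 k f (x, y) fun _ => (0, 1) := by
  have hshift : ContDiff 𝕜 n fun w => f (w + (x, 0)) := hf.comp (contDiff_id.add contDiff_const)
  have hslice :
      (fun y => f (x, y)) = (fun w => f (w + (x, 0))) ∘ ContinuousLinearMap.inr 𝕜 𝕜 𝕜 := by
    ext y; simp
  rw [hslice, iteratedDeriv_eq_iteratedFDeriv,
    ContinuousLinearMap.iteratedFDeriv_comp_right _ hshift _ hk, iteratedFDeriv_comp_add_right]
  simp

theorem continuous_iteratedDeriv_comp_prodMk {f : 𝕜 × 𝕜 → F} (hf : ContDiff 𝕜 n f)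
    (hk : k ≤ n) :
    Continuous fun w : 𝕜 × 𝕜 => iteratedDeriv k (fun y => f (w.1, y)) w.2 := by
  simp only [iteratedDeriv_comp_prodMk_eq hf hk]
  exact (ContinuousMultilinearMap.apply 𝕜 _ F _).continuous.comp (hf.continuous_iteratedFDeriv hk)

theorem Function.Periodic.iteratedDeriv_comp_prodMk {f : 𝕜 × 𝕜 → F} {u : 𝕜 × 𝕜}
    (hper : Periodic f u) (hf : ContDiff 𝕜 n f) (hk : k ≤ n) :
    Periodic (fun w : 𝕜 × 𝕜 => iteratedDeriv k (fun y => f (w.1, y)) w.2) u := by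
  intro w
  simp only [iteratedDeriv_comp_prodMk_eq hf hk, Prod.mk.eta]
  rw [hper.iteratedFDeriv k w]

end Slices

theorem exists_norm_le_of_continuous_of_periodic_int {E : Type*} [NormedAddCommGroup E]
    {g : ℝ × ℝ → E} (hg : Continuous g) (hper : ∀ m n : ℤ, Periodic g ((m : ℝ), (n : ℝ))) :
    ∃ B, ∀ w, ‖g w‖ ≤ B := by
  obtain ⟨B, hB⟩ :=
    (isCompact_Icc (a := ((0 : ℝ), (0 : ℝ))) (b := (1, 1))).exists_bound_of_continuousOn
      hg.continuousOn
  refine ⟨B, fun w => ?_⟩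
  have hw : g w = g (Int.fract w.1, Int.fract w.2) := by
    rw [← hper ⌊w.1⌋ ⌊w.2⌋ (Int.fract w.1, Int.fract w.2), Prod.mk_add_mk, Int.fract_add_floor,
      Int.fract_add_floor]
  rw [hw]
  exact hB _ ⟨⟨Int.fract_nonneg _, Int.fract_nonneg _⟩,
    (Int.fract_lt_one _).le, (Int.fract_lt_one _).le⟩

section IntegralAlongLine

variable {E : Type*} [NormedAddCommGroup E] [NormedSpace ℝ E]

theorem hasDerivAt_integral_comp_line {Φ Ψ : ℝ × ℝ → E} (hΦ : Continuous Φ) (hΨ : Continuous Ψ)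
    {B : ℝ} (hB : ∀ w, ‖Ψ w‖ ≤ B) (hd : ∀ x y, HasDerivAt (fun y => Φ (x, y)) (Ψ (x, y)) y)
    (p q T l : ℝ) :
    HasDerivAt (fun l => ∫ t in (0 : ℝ)..T, Φ (p * t, q * t + l))
      (∫ t in (0 : ℝ)..T, Ψ (p * t, q * t + l)) l := by
  have hline : ∀ l : ℝ, Continuous fun t : ℝ => ((p * t, q * t + l) : ℝ × ℝ) := by
    intro l; fun_prop
  refine (intervalIntegral.hasDerivAt_integral_of_dominated_loc_of_deriv_le
    (F' := fun l t => Ψ (p * t, q * t + l)) (bound := fun _ => B) Filter.univ_mem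
    (Filter.Eventually.of_forall fun l => (hΦ.comp (hline l)).aestronglyMeasurable)
    ((hΦ.comp (hline l)).intervalIntegrable 0 T) (hΨ.comp (hline l)).aestronglyMeasurable
    (ae_of_all _ fun t _ l _ => hB _) intervalIntegrable_const
    (ae_of_all _ fun t _ l _ => ?_)).2
  simpa [Function.comp_def] using
    (hd (p * t) (q * t + l)).scomp l ((hasDerivAt_id l).const_add (q * t))

theorem periodic_integral_comp_line {Φ : ℝ × ℝ → E}
    (hΦ : ∀ m n : ℤ, Periodic Φ ((m : ℝ), (n : ℝ))) {p q T : ℝ} {a b : ℤ} (ha : a ≠ 0)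
    (hab : IsCoprime a b) (haT : p * T = a) (hbT : q * T = b) :
    Periodic (fun l => ∫ t in (0 : ℝ)..T, Φ (p * t, q * t + l)) (1 / a) := by
  obtain ⟨u, v, huv⟩ := hab
  have haR : (a : ℝ) ≠ 0 := Int.cast_ne_zero.2 ha
  have huvR : (u : ℝ) * a + v * b = 1 := by exact_mod_cast huv
  intro l
  have horbit : Periodic (fun t => Φ (p * t, q * t + l)) T := fun t => by
    simpa [mul_add, haT, hbT, add_right_comm] using hΦ a b (p * t, q * t + l)
  -- `u a + v b = 1` gives `(p s, q s) = (v, 1 / a - u)`, an integer translate of `(0, 1 / a)`.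
  set s : ℝ := v * T / a
  have hshift : ∀ t, Φ (p * (t + s), q * (t + s) + l) = Φ (p * t, q * t + (l + 1 / a)) := by
    intro t
    have hps : p * s = v := by simp only [s]; field_simp; linear_combination (v : ℝ) * haT
    have hqs : q * s = 1 / a - u := by
      simp only [s]; field_simp; linear_combination (v : ℝ) * hbT + huvR
    have := hΦ v (-u) (p * t, q * t + (l + 1 / a))
    simp only [Prod.mk_add_mk, Int.cast_neg] at this
    rw [← this, mul_add, mul_add, hps, hqs]
    congr 2; ring
  calc (∫ t in (0 : ℝ)..T, Φ (p * t, q * t + (l + 1 / a)))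
      = ∫ t in (0 : ℝ)..T, Φ (p * (t + s), q * (t + s) + l) := by simp only [hshift]
    _ = ∫ t in s..s + T, Φ (p * t, q * t + l) := by
      rw [intervalIntegral.integral_comp_add_right (fun t => Φ (p * t, q * t + l)), zero_add,
        add_comm]
    _ = ∫ t in (0 : ℝ)..T, Φ (p * t, q * t + l) := by
      simpa using horbit.intervalIntegral_add_eq s 0

end IntegralAlongLine

theorem integral_sub_le_of_abs_average_iteratedDeriv_le {f : ℝ × ℝ → ℝ} {n : ℕ}
    (hf : ContDiff ℝ (n + 1) f) (hper : ∀ m n : ℤ, Periodic f ((m : ℝ), (n : ℝ)))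
    {p q T : ℝ} {a b : ℤ} (ha : a ≠ 0) (hab : IsCoprime a b) (haT : p * T = a) (hbT : q * T = b)
    {F : ℝ → ℝ} (hF : ∀ l, F l = (1 / T) * ∫ t in (0 : ℝ)..T, f (p * t, q * t + l)) {B : ℝ}
    (hB : ∀ l, |(1 / T) * ∫ t in (0 : ℝ)..T,
      iteratedDeriv (n + 1) (fun y => f (p * t, y)) (q * t + l)| ≤ B) :
    (∫ l in (0 : ℝ)..1, F l) - F 0 ≤ B / |(a : ℝ)| ^ (n + 1) := by
  set g : ℕ → ℝ × ℝ → ℝ := fun k w => iteratedDeriv k (fun y => f (w.1, y)) w.2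
  set G : ℕ → ℝ → ℝ := fun k l => (1 / T) * ∫ t in (0 : ℝ)..T, g k (p * t, q * t + l)
  have hcast : ∀ {k : ℕ}, k ≤ n + 1 → (k : WithTop ℕ∞) ≤ n + 1 := fun hk => by exact_mod_cast hk
  have hg_cont : ∀ k ≤ n + 1, Continuous (g k) := fun k hkn =>
    continuous_iteratedDeriv_comp_prodMk hf (hcast hkn)
  have hg_per : ∀ k ≤ n + 1, ∀ m n : ℤ, Periodic (g k) ((m : ℝ), (n : ℝ)) :=
    fun k hkn m n => (hper m n).iteratedDeriv_comp_prodMk hf (hcast hkn)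
  have hg_deriv : ∀ k ≤ n, ∀ x y, HasDerivAt (fun y => g k (x, y)) (g (k + 1) (x, y)) y :=
    fun k hkn x y => (hf.comp (contDiff_const.prodMk contDiff_id)).hasDerivAt_iteratedDeriv
      (by exact_mod_cast Nat.lt_succ_of_le hkn) y
  have hG_deriv : ∀ k ≤ n, ∀ l, HasDerivAt (G k) (G (k + 1) l) l := by
    intro k hkn l
    obtain ⟨M, hM⟩ := exists_norm_le_of_continuous_of_periodic_int (hg_cont (k + 1) (by omega))
      (hg_per (k + 1) (by omega))
    exact (hasDerivAt_integral_comp_line (hg_cont k (by omega)) (hg_cont (k + 1) (by omega)) hM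
      (hg_deriv k hkn) p q T l).const_mul (1 / T)
  have hG_per : ∀ k ≤ n, Periodic (G k) (1 / |(a : ℝ)|) := by
    intro k hkn
    have h : Periodic (G k) (1 / a) := fun l =>
      congrArg (1 / T * ·) (periodic_integral_comp_line (hg_per k (by omega)) ha hab haT hbT l)
    rcases abs_choice (a : ℝ) with habs | habs <;> rw [habs]
    · exact h
    · simpa only [div_neg] using h.neg
  have hFG : F = G 0 := funext fun l => by simp [hF, G, g]
  have hG0 : ∀ l, G 0 l - G 0 0 ≤ B / |(a : ℝ)| ^ (n + 1) := fun l =>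
    (le_abs_self _).trans <| (abs_sub_le_mul_pow_of_periodic_of_hasDerivAt
      (by positivity) n hG_per hG_deriv hB l 0).trans_eq (by rw [one_div_pow, mul_one_div])
  have hG0_cont : Continuous (G 0) :=
    continuous_iff_continuousAt.2 fun l => (hG_deriv 0 (by omega) l).continuousAt
  rw [hFG]
  exact intervalIntegral_sub_le_of_forall_sub_le hG0_cont hG0

section Diophantine

variable {p₀ q₀ C₀ : ℝ} {p q T : ℝ} {a b : ℤ}

theorem sq_mul_sq_mul_pow_four_le_sq_mul_dist (hnorm : p₀ ^ 2 + q₀ ^ 2 = 1) (hq₀ : q₀ ≠ 0)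
    (hC₀ : 0 ≤ C₀) (happrox : ∀ a b : ℤ, b ≠ 0 → |p₀ / q₀ - (a : ℝ) / b| ≥ C₀ / (b : ℝ) ^ 2)
    (hb : b ≠ 0) (haT : p * T = a) (hbT : q * T = b) :
    q₀ ^ 2 * C₀ ^ 2 * p ^ 4 ≤ q ^ 2 * (a ^ 4 * ((p - p₀) ^ 2 + (q - q₀) ^ 2)) := by
  have hbR : (b : ℝ) ≠ 0 := Int.cast_ne_zero.2 hb
  set D := p₀ * b - q₀ * a
  have hD : |q₀| * C₀ ≤ |D| * |(b : ℝ)| := by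
    have h := happrox a b hb
    have e : p₀ / q₀ - a / b = D / (q₀ * b) := div_sub_div _ _ hq₀ hbR
    rw [ge_iff_le, e, abs_div, abs_mul, div_le_div_iff₀ (by positivity) (by positivity),
      ← sq_abs (b : ℝ)] at h
    exact le_of_mul_le_mul_right (by linarith) (abs_pos.2 hbR)
  have hDT : D = T * (p₀ * (q - q₀) - q₀ * (p - p₀)) := by
    simp only [D, ← haT, ← hbT]; ring
  have hCS : (p₀ * (q - q₀) - q₀ * (p - p₀)) ^ 2 ≤ (p - p₀) ^ 2 + (q - q₀) ^ 2 := by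
    nlinarith [sq_nonneg (p₀ * (p - p₀) + q₀ * (q - q₀))]
  have hD2 : q₀ ^ 2 * C₀ ^ 2 ≤ D ^ 2 * b ^ 2 := by
    simpa [mul_pow, ← sq, sq_abs] using mul_le_mul hD hD (by positivity) (by positivity)
  calc q₀ ^ 2 * C₀ ^ 2 * p ^ 4 ≤ D ^ 2 * b ^ 2 * p ^ 4 := by gcongr
    _ = q ^ 2 * ((p * T) ^ 4 * (p₀ * (q - q₀) - q₀ * (p - p₀)) ^ 2) := by
        rw [hDT, ← hbT]; ring
    _ ≤ q ^ 2 * (a ^ 4 * ((p - p₀) ^ 2 + (q - q₀) ^ 2)) := by rw [haT]; gcongr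

theorem sq_mul_sq_mul_pow_four_le_of_dist_le (hnorm : p₀ ^ 2 + q₀ ^ 2 = 1) (hq₀ : q₀ ≠ 0)
    (hC₀ : 0 ≤ C₀) (happrox : ∀ a b : ℤ, b ≠ 0 → |p₀ / q₀ - (a : ℝ) / b| ≥ C₀ / (b : ℝ) ^ 2)
    (ha : a ≠ 0) (hb : b ≠ 0) (haT : p * T = a) (hbT : q * T = b) {ε : ℝ} (hε : ε ≤ p₀ ^ 2 / 4)
    (hdist : (a : ℝ) ^ 4 * ((p - p₀) ^ 2 + (q - q₀) ^ 2) ≤ ε) :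
    q₀ ^ 2 * C₀ ^ 2 * p₀ ^ 4 ≤ 64 * ε := by
  have ha4 : 1 ≤ (a : ℝ) ^ 4 := by
    rw [← Even.pow_abs (by decide)]
    exact one_le_pow₀ (by exact_mod_cast Int.one_le_abs ha)
  have hdist' : (p - p₀) ^ 2 + (q - q₀) ^ 2 ≤ ε :=
    (le_mul_of_one_le_left (by positivity) ha4).trans hdist
  have hp : p₀ ^ 2 ≤ 4 * p ^ 2 := by
    nlinarith [sq_nonneg (2 * p - p₀), sq_nonneg (q - q₀)]
  have hq : q ^ 2 ≤ 4 := by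
    nlinarith [sq_nonneg (q - 2 * q₀), sq_nonneg (p - p₀), sq_nonneg q₀]
  calc q₀ ^ 2 * C₀ ^ 2 * p₀ ^ 4 = q₀ ^ 2 * C₀ ^ 2 * (p₀ ^ 2) ^ 2 := by ring
    _ ≤ q₀ ^ 2 * C₀ ^ 2 * (4 * p ^ 2) ^ 2 := by gcongr
    _ = 16 * (q₀ ^ 2 * C₀ ^ 2 * p ^ 4) := by ring
    _ ≤ 16 * (q ^ 2 * (a ^ 4 * ((p - p₀) ^ 2 + (q - q₀) ^ 2))) := by
        gcongr 16 * ?_; exact sq_mul_sq_mul_pow_four_le_sq_mul_dist hnorm hq₀ hC₀ happrox hb haT hbT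
    _ ≤ 16 * (4 * ε) := by gcongr
    _ = 64 * ε := by ring

end Diophantine

theorem stmt_14 (p₀ q₀ C₀ : ℝ) (hnorm : p₀ ^ 2 + q₀ ^ 2 = 1) (hq₀ : q₀ ≠ 0)
    (hC₀ : 0 < C₀) (hirr : Irrational (p₀ / q₀))
    (happrox : ∀ a b : ℤ, b ≠ 0 → |p₀ / q₀ - (a : ℝ) / b| ≥ C₀ / (b : ℝ) ^ 2) :
    ∃ C > 0, ∀ (f : ℝ × ℝ → ℝ), ContDiff ℝ 4 f →
      (∀ (x y : ℝ) (m n : ℤ), f (x + m, y + n) = f (x, y)) →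
      ∀ (p q T : ℝ), 0 < T →
      ∀ a b : ℤ, a ≠ 0 → b ≠ 0 → Int.gcd a b = 1 → p * T = a → q * T = b →
      ∀ F : ℝ → ℝ, (∀ l, F l = (1 / T) * ∫ t in (0:ℝ)..T, f (p * t, q * t + l)) →
      (∫ l in (0:ℝ)..1, F l) - F 0
          ≥ (1 / 2) * (p - p₀) ^ 2 + (1 / 2) * (q - q₀) ^ 2 →
      ∃ l : ℝ,
        |(1 / T) * ∫ t in (0:ℝ)..T, iteratedDeriv 4 (fun y => f (p * t, y)) (q * t + l)|
          ≥ C := by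
  have hp₀ : p₀ ≠ 0 := by simpa [hq₀] using hirr.ne_zero
  set C := min (p₀ ^ 2 / 8) (q₀ ^ 2 * C₀ ^ 2 * p₀ ^ 4 / 256)
  refine ⟨C, by positivity, fun f hf hper p q T _ a b ha hb hab haT hbT F hF hmin => ?_⟩
  by_contra! hsmall
  have hF_le := integral_sub_le_of_abs_average_iteratedDeriv_le (n := 3) hf
    (fun m n w => hper w.1 w.2 m n) ha (Int.isCoprime_iff_gcd_eq_one.2 hab) haT hbT hF
    (B := C) fun l => (hsmall l).le
  rw [Even.pow_abs (by decide), show 3 + 1 = 4 from rfl] at hF_le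
  have haR : (a : ℝ) ≠ 0 := by exact_mod_cast ha
  have hdist : (a : ℝ) ^ 4 * ((p - p₀) ^ 2 + (q - q₀) ^ 2) ≤ 2 * C := by
    have h := hmin.le.trans hF_le
    rw [le_div_iff₀ (by positivity)] at h
    linarith
  have := sq_mul_sq_mul_pow_four_le_of_dist_le hnorm hq₀ hC₀.le happrox ha hb haT hbT
    (by linarith [min_le_left (p₀ ^ 2 / 8) (q₀ ^ 2 * C₀ ^ 2 * p₀ ^ 4 / 256)]) hdist
  have : 0 < q₀ ^ 2 * C₀ ^ 2 * p₀ ^ 4 := by positivity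
  linarith [min_le_right (p₀ ^ 2 / 8) (q₀ ^ 2 * C₀ ^ 2 * p₀ ^ 4 / 256)]
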